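/- For the univariate depth D(x;μ) = min{μ((-∞,x]), μ([x,∞))}, the depth of x equals 1 - sup{μ(I) : I a compact interval with x ∉ I} , i.e. the depth based on the family of compact intervals coincides with the classical univariate depth. -/

import Mathlib

/-!
A compact interval missing `x` lies inside `(-∞, x)` or inside `(x, ∞)`, and by inner regularity
these two half-lines are exhausted in measure by the compact intervals they contain. Hence the
supremum in question is `max (μ (-∞, x)) (μ (x, ∞))`, and taking complements turns `1 - max`
into the `min` of `μ (-∞, x]` and `μ [x, ∞)`.
-/

open MeasureTheory Set
open scoped ENNReal

theorem Icc_subset_Iio_or_Ioi_of_notMem {α : Type*} [LinearOrder α] {a b x : α}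
    (hx : x ∉ Icc a b) :
    Icc a b ⊆ Iio x ∨ Icc a b ⊆ Ioi x := by
  rw [mem_Icc, not_and_or, not_le, not_le] at hx
  rcases hx with hxa | hbx
  · exact Or.inr fun y hy => hxa.trans_le hy.1
  · exact Or.inl fun y hy => hy.2.trans_lt hbx

section

variable {α : Type*} [LinearOrder α] [TopologicalSpace α] [OrderClosedTopology α]
  [MeasurableSpace α] {μ : Measure α}

theorem Set.OrdConnected.exists_Icc_subset_lt_measure [μ.InnerRegularCompactLTTop] {s : Set α}
    (hs : s.OrdConnected) (hsm : MeasurableSet s) (hμs : μ s ≠ ∞) {r : ℝ≥0∞} (hr : r < μ s) :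
    ∃ a b, Icc a b ⊆ s ∧ r < μ (Icc a b) := by
  obtain ⟨K, hKs, hK, hrK⟩ := hsm.exists_lt_isCompact_of_ne_top hμs hr
  have hKne : K.Nonempty := nonempty_of_measure_ne_zero (ne_bot_of_gt hrK)
  obtain ⟨a, haK, ha⟩ := hK.exists_isLeast hKne
  obtain ⟨b, hbK, hb⟩ := hK.exists_isGreatest hKne
  have hKab : K ⊆ Icc a b := fun y hy => ⟨ha hy, hb hy⟩
  exact ⟨a, b, hs.out (hKs haK) (hKs hbK), hrK.trans_le (measure_mono hKab)⟩

theorem sSup_measure_Icc_notMem_eq_max [OpensMeasurableSpace α] [IsFiniteMeasure μ]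
    [μ.InnerRegularCompactLTTop] (x : α) :
    sSup {r : ℝ≥0∞ | ∃ a b : α, x ∉ Icc a b ∧ r = μ (Icc a b)} =
      max (μ (Iio x)) (μ (Ioi x)) := by
  apply le_antisymm
  · refine sSup_le ?_
    rintro _ ⟨a, b, hx, rfl⟩
    rcases Icc_subset_Iio_or_Ioi_of_notMem hx with h | h
    · exact (measure_mono h).trans (le_max_left _ _)
    · exact (measure_mono h).trans (le_max_right _ _)
  · have half_line_le {s : Set α} (hs : s.OrdConnected) (hsm : MeasurableSet s) (hxs : x ∉ s) :
        μ s ≤ sSup {r : ℝ≥0∞ | ∃ a b : α, x ∉ Icc a b ∧ r = μ (Icc a b)} := by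
      refine le_of_forall_lt fun r hr => ?_
      obtain ⟨a, b, hab, hr⟩ := hs.exists_Icc_subset_lt_measure hsm (measure_ne_top μ s) hr
      exact hr.trans_le (le_sSup ⟨a, b, fun h => hxs (hab h), rfl⟩)
    exact max_le (half_line_le ordConnected_Iio measurableSet_Iio (lt_irrefl x))
      (half_line_le ordConnected_Ioi measurableSet_Ioi (lt_irrefl x))

end

/-- The univariate depth `min{μ(-∞,x], μ[x,∞)}` coincides with the depth based on the
family of compact intervals: `1 - sup{μ [a,b] : x ∉ [a,b]}`. -/
theorem univariate_depth_eq_interval_depth (μ : Measure ℝ) [IsProbabilityMeasure μ] (x : ℝ) :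
    min (μ (Set.Iic x)) (μ (Set.Ici x)) =
      1 - sSup {r : ℝ≥0∞ | ∃ a b : ℝ, x ∉ Set.Icc a b ∧ r = μ (Set.Icc a b)} := by
  rw [sSup_measure_Icc_notMem_eq_max,
    Antitone.map_max (f := (1 - ·)) fun _ _ h => tsub_le_tsub_left h 1,
    ← prob_compl_eq_one_sub measurableSet_Iio, ← prob_compl_eq_one_sub measurableSet_Ioi,
    compl_Iio, compl_Ioi, min_comm]
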